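/- In the explosive PAR(1) model with |φ| > 1, for each r = 1,…,P, φ^{-2n} C_n^{(r)} → 0 almost surely and in L¹, where C_n^{(r)} = ∑_{j=0}^{n-1} X_{jP+r-1} u_{jP+r}. -/

import Mathlib

/-!
Over one period the recursion reads `X (m + P) = φ * X m + R m`, where the remainder `R m` only
involves `P` coefficients and `P` noise terms, so it is bounded in `L²` uniformly in `m`
(the coefficients are periodic and the noise has periodic second moments). Hence
`‖X (j * P + r - 1)‖₂ = O(j |φ| ^ j)`, and Cauchy–Schwarz gives `E |C_n| = O(n² |φ| ^ n)`.
Thus `∑ₙ E |φ ^ (-2n) C_n| < ∞`, which yields convergence to `0` both in `L¹` and almost surely.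
-/

open MeasureTheory ProbabilityTheory Filter Topology Finset
open scoped ENNReal

namespace Function.Periodic

variable {P : ℕ}

theorem exists_forall_le_of_ne_top {f : ℕ → ℝ≥0∞} (hf : Periodic f P) (hP : 0 < P)
    (hfin : ∀ k, f k ≠ ∞) : ∃ C ≠ ∞, ∀ k, f k ≤ C := by
  refine ⟨(range P).sup f,
    ((Finset.sup_lt_iff ENNReal.zero_lt_top).2 fun k _ => (hfin k).lt_top).ne, fun k => ?_⟩
  rw [← hf.map_mod_nat k]
  exact le_sup (mem_range.2 (Nat.mod_lt k hP))

theorem prod_Ioc_add_eq_prod_range {M : Type*} [CommMonoid M] {f : ℕ → M} (hf : Periodic f P)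
    (m : ℕ) : ∏ i ∈ Ioc m (m + P), f i = ∏ i ∈ range P, f i := by
  have hIoc : Ioc m (m + P) = Ico (m + 1) (m + 1 + P) := by ext; simp; omega
  rw [hIoc, ← prod_map_val, ← prod_map_val, range_val, ← Nat.multiset_Ico_map_mod (m + 1) P,
    Multiset.map_map]
  exact congrArg _ (Multiset.map_congr rfl fun i _ => (hf.map_mod_nat i).symm)

end Function.Periodic

theorem le_succ_mul_mul_pow_of_le_mul_add {R : Type*} [CommSemiring R] [PartialOrder R]
    [IsOrderedRing R] {y : ℕ → R} {c D : R} (hc : 1 ≤ c) (hD : 0 ≤ D) (hy0 : 0 ≤ y 0)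
    (hy : ∀ j, y (j + 1) ≤ c * y j + D) (j : ℕ) : y j ≤ (j + 1) * (y 0 + D) * c ^ j := by
  induction j with
  | zero => simpa using le_add_of_nonneg_right hD
  | succ j ih =>
    have hE : 0 ≤ y 0 + D := add_nonneg hy0 hD
    have hDE : D ≤ (y 0 + D) * c ^ (j + 1) :=
      (le_add_of_nonneg_left hy0).trans (le_mul_of_one_le_right hE (one_le_pow₀ hc))
    calc y (j + 1) ≤ c * y j + D := hy j
      _ ≤ c * ((j + 1) * (y 0 + D) * c ^ j) + (y 0 + D) * c ^ (j + 1) := by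
        gcongr
        exact zero_le_one.trans hc
      _ = ((j + 1 : ℕ) + 1) * (y 0 + D) * c ^ (j + 1) := by push_cast; ring

theorem identDistrib_add_of_map_eq {Ω β : Type*} [MeasurableSpace Ω] [MeasurableSpace β]
    {μ : Measure Ω} {u : ℕ → Ω → β} {P : ℕ} (hu : ∀ k, AEMeasurable (u k) μ)
    (hpd : ∀ m : ℕ, Measure.map (fun ω => fun i : Fin m => u ((i : ℕ) + P) ω) μ
      = Measure.map (fun ω => fun i : Fin m => u (i : ℕ) ω) μ) (k : ℕ) :
    IdentDistrib (u (k + P)) (u k) μ μ :=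
  (IdentDistrib.mk (aemeasurable_pi_lambda _ fun _ => hu _)
    (aemeasurable_pi_lambda _ fun _ => hu _) (hpd (k + 1))).comp
    (measurable_pi_apply (Fin.last k))

section Lp

variable {Ω : Type*} [MeasurableSpace Ω] {μ : Measure Ω} {p : ℝ≥0∞}

theorem eLpNorm_le_enorm_mul_add_eLpNorm_sub {f g : Ω → ℝ} (hp : 1 ≤ p)
    (hf : AEStronglyMeasurable f μ) (hg : AEStronglyMeasurable g μ) (c : ℝ) :
    eLpNorm f p μ ≤ ‖c‖ₑ * eLpNorm g p μ + eLpNorm (fun ω => f ω - c * g ω) p μ := by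
  calc eLpNorm f p μ = eLpNorm (c • g + fun ω => f ω - c * g ω) p μ := by
        congr 1; ext ω; simp
    _ ≤ eLpNorm (c • g) p μ + eLpNorm (fun ω => f ω - c * g ω) p μ :=
        eLpNorm_add_le (hg.const_smul c) (hf.sub (hg.const_mul c)) hp
    _ = ‖c‖ₑ * eLpNorm g p μ + eLpNorm (fun ω => f ω - c * g ω) p μ := by
        rw [eLpNorm_const_smul]

theorem eLpNorm_sum_mul_le {Y V : ℕ → Ω → ℝ} (hY : ∀ j, AEStronglyMeasurable (Y j) μ)
    (hV : ∀ j, AEStronglyMeasurable (V j) μ) {E U c : ℝ≥0∞} (hc : 1 ≤ c)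
    (hYb : ∀ j, eLpNorm (Y j) 2 μ ≤ (j + 1) * E * c ^ j) (hVb : ∀ j, eLpNorm (V j) 2 μ ≤ U)
    (n : ℕ) : eLpNorm (fun ω => ∑ j ∈ range n, Y j ω * V j ω) 1 μ ≤ E * U * n ^ 2 * c ^ n := by
  have hterm : ∀ j ∈ range n, eLpNorm (Y j • V j) 1 μ ≤ n * E * c ^ n * U := by
    intro j hj
    calc eLpNorm (Y j • V j) 1 μ ≤ eLpNorm (Y j) 2 μ * eLpNorm (V j) 2 μ :=
          eLpNorm_smul_le_mul_eLpNorm (p := 2) (q := 2) (hV j) (hY j)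
      _ ≤ (j + 1) * E * c ^ j * U := mul_le_mul' (hYb j) (hVb j)
      _ ≤ n * E * c ^ n * U := by
          gcongr
          exacts [mod_cast mem_range.1 hj, (mem_range.1 hj).le]
  calc eLpNorm (fun ω => ∑ j ∈ range n, Y j ω * V j ω) 1 μ
      = eLpNorm (∑ j ∈ range n, Y j • V j) 1 μ := by rw [sum_fn]; rfl
    _ ≤ ∑ j ∈ range n, eLpNorm (Y j • V j) 1 μ :=
        eLpNorm_sum_le (fun j _ => (hY j).mul (hV j)) le_rfl
    _ ≤ ∑ _j ∈ range n, n * E * c ^ n * U := sum_le_sum hterm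
    _ = E * U * n ^ 2 * c ^ n := by rw [sum_const, card_range, nsmul_eq_mul]; ring

theorem tsum_eLpNorm_inv_sq_pow_mul_ne_top {φ : ℝ} (hφ : 1 < |φ|) {G : ℕ → Ω → ℝ}
    {K : ℝ≥0∞} (hK : K ≠ ∞) (hG : ∀ n, eLpNorm (G n) p μ ≤ K * n ^ 2 * ‖φ‖ₑ ^ n) :
    ∑' n, eLpNorm (fun ω => ((φ ^ 2) ^ n)⁻¹ * G n ω) p μ ≠ ∞ := by
  have hφ0 : φ ≠ 0 := by rintro rfl; norm_num at hφ
  have hbound : ∀ n : ℕ, eLpNorm (fun ω => ((φ ^ 2) ^ n)⁻¹ * G n ω) p μ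
      ≤ K * ‖(n : ℝ) ^ 2 * φ⁻¹ ^ n‖ₑ := by
    intro n
    calc eLpNorm (fun ω => ((φ ^ 2) ^ n)⁻¹ * G n ω) p μ
        = ‖((φ ^ 2) ^ n)⁻¹‖ₑ * eLpNorm (G n) p μ :=
          eLpNorm_const_smul ((φ ^ 2) ^ n)⁻¹ (G n) p μ
      _ ≤ ‖((φ ^ 2) ^ n)⁻¹‖ₑ * (K * n ^ 2 * ‖φ‖ₑ ^ n) := by gcongr; exact hG n
      _ = K * ‖(n : ℝ) ^ 2 * φ⁻¹ ^ n‖ₑ := by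
        rw [show (n : ℝ) ^ 2 * φ⁻¹ ^ n = (n : ℝ) ^ 2 * (((φ ^ 2) ^ n)⁻¹ * φ ^ n) by
          rw [← inv_pow, ← mul_pow]; field_simp,
          enorm_mul, enorm_mul, enorm_pow, enorm_pow, Real.enorm_natCast]
        ring
  have hsummable : ∑' n : ℕ, ‖(n : ℝ) ^ 2 * φ⁻¹ ^ n‖ₑ ≠ ∞ :=
    tsum_enorm_ne_top_iff_summable_norm.2 (summable_norm_pow_mul_geometric_of_norm_lt_one 2
      (by rw [norm_inv, Real.norm_eq_abs]; exact inv_lt_one_of_one_lt₀ hφ))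
  refine ne_top_of_le_ne_top ?_ (ENNReal.tsum_le_tsum hbound)
  rw [ENNReal.tsum_mul_left]
  exact ENNReal.mul_ne_top hK hsummable

variable {E : Type*} [NormedAddCommGroup E] {F : ℕ → Ω → E}

theorem ae_tendsto_zero_of_tsum_eLpNorm_ne_top (hF : ∀ n, AEStronglyMeasurable (F n) μ)
    (h : ∑' n, eLpNorm (F n) 1 μ ≠ ∞) : ∀ᵐ ω ∂μ, Tendsto (fun n => F n ω) atTop (𝓝 0) := by
  filter_upwards [summable_norm_of_tsum_eLpNorm_ne_top le_rfl hF h] with ω hω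
  exact tendsto_zero_iff_norm_tendsto_zero.2 hω.tendsto_atTop_zero

theorem tendsto_integral_norm_of_tsum_eLpNorm_ne_top (hF : ∀ n, AEStronglyMeasurable (F n) μ)
    (h : ∑' n, eLpNorm (F n) 1 μ ≠ ∞) :
    Tendsto (fun n => ∫ ω, ‖F n ω‖ ∂μ) atTop (𝓝 0) := by
  have := (ENNReal.tendsto_toReal ENNReal.zero_ne_top).comp
    (ENNReal.tendsto_atTop_zero_of_tsum_ne_top h)
  simpa [Function.comp_def, eLpNorm_one_eq_lintegral_enorm,
    integral_norm_eq_lintegral_enorm (hF _)] using this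

end Lp

section Recursion

variable {Ω : Type*} [MeasurableSpace Ω] {μ : Measure Ω} {p : ℝ≥0∞} {a : ℕ → ℝ}
  {u X : ℕ → Ω → ℝ}

theorem memLp_of_recursion (hX0 : MemLp (X 0) p μ) (hu : ∀ k, MemLp (u k) p μ)
    (hrec : ∀ k ω, X (k + 1) ω = a (k + 1) * X k ω + u (k + 1) ω) (k : ℕ) : MemLp (X k) p μ := by
  induction k with
  | zero => exact hX0
  | succ k ih =>
    rw [show X (k + 1) = fun ω => a (k + 1) * X k ω + u (k + 1) ω from funext (hrec k)]
    exact (ih.const_mul _).add (hu _)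

theorem exists_eLpNorm_sub_prod_mul_le (hp : 1 ≤ p) (hX : ∀ k, AEStronglyMeasurable (X k) μ)
    (hu : ∀ k, AEStronglyMeasurable (u k) μ) {A U : ℝ≥0∞} (hA : A ≠ ∞) (hU : U ≠ ∞)
    (ha : ∀ k, ‖a k‖ₑ ≤ A) (huU : ∀ k, eLpNorm (u k) p μ ≤ U)
    (hrec : ∀ k ω, X (k + 1) ω = a (k + 1) * X k ω + u (k + 1) ω) (q : ℕ) :
    ∃ D ≠ ∞, ∀ m,
      eLpNorm (fun ω => X (m + q) ω - (∏ i ∈ Ioc m (m + q), a i) * X m ω) p μ ≤ D := by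
  induction q with
  | zero => exact ⟨0, ENNReal.zero_ne_top, fun m => by simp⟩
  | succ q ih =>
    obtain ⟨D, hD, hRD⟩ := ih
    refine ⟨A * D + U, by finiteness, fun m => ?_⟩
    set R := fun ω => X (m + q) ω - (∏ i ∈ Ioc m (m + q), a i) * X m ω
    have hR : AEStronglyMeasurable R μ := (hX _).sub ((hX m).const_mul _)
    have hstep : (fun ω => X (m + (q + 1)) ω - (∏ i ∈ Ioc m (m + (q + 1)), a i) * X m ω)
        = a (m + q + 1) • R + u (m + q + 1) := by
      ext ω
      simp only [R, ← add_assoc, prod_Ioc_succ_top (Nat.le_add_right m q), hrec, Pi.add_apply,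
        Pi.smul_apply, smul_eq_mul]
      ring
    calc _ = eLpNorm (a (m + q + 1) • R + u (m + q + 1)) p μ := by rw [hstep]
      _ ≤ eLpNorm (a (m + q + 1) • R) p μ + eLpNorm (u (m + q + 1)) p μ :=
          eLpNorm_add_le (hR.const_smul _) (hu _) hp
      _ = ‖a (m + q + 1)‖ₑ * eLpNorm R p μ + eLpNorm (u (m + q + 1)) p μ := by
          rw [eLpNorm_const_smul]
      _ ≤ A * D + U := by gcongr; exacts [ha _, hRD m, huU _]

theorem eLpNorm_le_succ_mul_pow_of_eLpNorm_sub_le (hp : 1 ≤ p)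
    (hX : ∀ k, AEStronglyMeasurable (X k) μ) {P : ℕ} {φ : ℝ} (hφ : 1 ≤ ‖φ‖ₑ) {D : ℝ≥0∞}
    (hD : ∀ m, eLpNorm (fun ω => X (m + P) ω - φ * X m ω) p μ ≤ D) (s j : ℕ) :
    eLpNorm (X (j * P + s)) p μ ≤ (j + 1) * (eLpNorm (X s) p μ + D) * ‖φ‖ₑ ^ j := by
  have hperiod : ∀ j, eLpNorm (X ((j + 1) * P + s)) p μ
      ≤ ‖φ‖ₑ * eLpNorm (X (j * P + s)) p μ + D := fun j => by
    have hidx : (j + 1) * P + s = j * P + s + P := by ring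
    calc eLpNorm (X ((j + 1) * P + s)) p μ
        ≤ ‖φ‖ₑ * eLpNorm (X (j * P + s)) p μ
          + eLpNorm (fun ω => X ((j + 1) * P + s) ω - φ * X (j * P + s) ω) p μ :=
          eLpNorm_le_enorm_mul_add_eLpNorm_sub hp (hX _) (hX _) φ
      _ ≤ ‖φ‖ₑ * eLpNorm (X (j * P + s)) p μ + D := by
        gcongr
        simpa only [hidx] using hD (j * P + s)
  simpa only [zero_mul, zero_add] using le_succ_mul_mul_pow_of_le_mul_add
    (y := fun j => eLpNorm (X (j * P + s)) p μ) hφ zero_le zero_le hperiod j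

end Recursion

theorem stmt16_general {Ω : Type*} [MeasurableSpace Ω] (μ : Measure Ω) [IsProbabilityMeasure μ]
    (P : ℕ) (hP : 1 ≤ P) (a : ℕ → ℝ) (hper : ∀ k, a (k + P) = a k)
    (φ : ℝ) (hφdef : φ = ∏ j ∈ Finset.Icc 1 P, a j) (hφ : 1 < |φ|)
    (u : ℕ → Ω → ℝ) (huL2 : ∀ k, MemLp (u k) 2 μ)
    (hpd : ∀ m : ℕ,
      Measure.map (fun ω => fun i : Fin m => u ((i : ℕ) + P) ω) μ
        = Measure.map (fun ω => fun i : Fin m => u (i : ℕ) ω) μ)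
    (X : ℕ → Ω → ℝ) (hX0 : MemLp (X 0) 2 μ)
    (hrec : ∀ k ω, X (k + 1) ω = a (k + 1) * X k ω + u (k + 1) ω) :
    ∀ r : ℕ, 1 ≤ r → r ≤ P →
      (∀ᵐ ω ∂μ, Tendsto
          (fun n => ((φ ^ 2) ^ n)⁻¹ *
            ∑ j ∈ Finset.range n, X (j * P + r - 1) ω * u (j * P + r) ω)
          atTop (𝓝 0)) ∧
      Tendsto (fun n => ∫ ω,
          |((φ ^ 2) ^ n)⁻¹ *
            ∑ j ∈ Finset.range n, X (j * P + r - 1) ω * u (j * P + r) ω| ∂μ)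
        atTop (𝓝 0) := by
  intro r hr _
  obtain ⟨s, rfl⟩ : ∃ s, r = s + 1 := ⟨r - 1, by omega⟩
  have hX : ∀ k, MemLp (X k) 2 μ := memLp_of_recursion hX0 huL2 hrec
  obtain ⟨U, hU, huU⟩ := Function.Periodic.exists_forall_le_of_ne_top
    (fun k => (identDistrib_add_of_map_eq (fun k => (huL2 k).aemeasurable) hpd k).eLpNorm_eq 2)
    hP (fun k => (huL2 k).eLpNorm_ne_top)
  obtain ⟨A, hA, haA⟩ := Function.Periodic.exists_forall_le_of_ne_top
    (f := fun k => ‖a k‖ₑ) (fun k => congrArg _ (hper k)) hP (fun _ => enorm_ne_top)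
  obtain ⟨D, hD, hRD⟩ := exists_eLpNorm_sub_prod_mul_le one_le_two (fun k => (hX k).1)
    (fun k => (huL2 k).1) hA hU haA huU hrec P
  have hwindow : ∀ m, ∏ i ∈ Ioc m (m + P), a i = φ := fun m => by
    rw [Function.Periodic.prod_Ioc_add_eq_prod_range hper,
      ← Function.Periodic.prod_Ioc_add_eq_prod_range hper 0, hφdef, zero_add,
      ← Icc_add_one_left_eq_Ioc, zero_add]
  have hφ1 : 1 ≤ ‖φ‖ₑ := by
    rw [Real.enorm_eq_ofReal_abs]
    exact ENNReal.one_le_ofReal.2 hφ.le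
  have hgrowth := eLpNorm_le_succ_mul_pow_of_eLpNorm_sub_le one_le_two (fun k => (hX k).1) hφ1
    (fun m => by simpa only [hwindow] using hRD m) s
  have hsum := eLpNorm_sum_mul_le (fun j => (hX (j * P + s)).1)
    (fun j => (huL2 (j * P + s + 1)).1) hφ1 hgrowth (fun j => huU _)
  have hnorm := tsum_eLpNorm_inv_sq_pow_mul_ne_top hφ
    (ENNReal.mul_ne_top (ENNReal.add_ne_top.2 ⟨(hX s).eLpNorm_ne_top, hD⟩) hU) hsum
  have hmeas : ∀ n, AEStronglyMeasurable (fun ω => ((φ ^ 2) ^ n)⁻¹ *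
      ∑ j ∈ range n, X (j * P + s) ω * u (j * P + s + 1) ω) μ := fun n =>
    (Finset.aestronglyMeasurable_fun_sum _ fun j _ => (hX _).1.mul (huL2 _).1).const_mul _
  simp only [Nat.add_sub_cancel, ← add_assoc, ← Real.norm_eq_abs]
  exact ⟨ae_tendsto_zero_of_tsum_eLpNorm_ne_top hmeas hnorm,
    tendsto_integral_norm_of_tsum_eLpNorm_ne_top hmeas hnorm⟩

/-- first part of Lemma 2: φ^{-2n} C_n^{(r)} → 0 a.s. and in L¹, where
C_n^{(r)} = ∑_{j=0}^{n-1} X_{jP+r-1} u_{jP+r}. -/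
theorem stmt16 {Ω : Type*} [MeasurableSpace Ω] (μ : Measure Ω) [IsProbabilityMeasure μ]
    (P : ℕ) (hP : 1 ≤ P) (a : ℕ → ℝ) (hper : ∀ k, a (k + P) = a k)
    (φ : ℝ) (hφdef : φ = ∏ j ∈ Finset.Icc 1 P, a j) (hφ : 1 < |φ|)
    (u : ℕ → Ω → ℝ) (humeas : ∀ k, Measurable (u k)) (huL2 : ∀ k, MemLp (u k) 2 μ)
    (hucent : ∀ k, ∫ ω, u k ω ∂μ = 0)
    (hpd : ∀ m : ℕ,
      Measure.map (fun ω => fun i : Fin m => u ((i : ℕ) + P) ω) μ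
        = Measure.map (fun ω => fun i : Fin m => u (i : ℕ) ω) μ)
    (X : ℕ → Ω → ℝ) (hX0 : MemLp (X 0) 2 μ)
    (hrec : ∀ k ω, X (k + 1) ω = a (k + 1) * X k ω + u (k + 1) ω) :
    ∀ r : ℕ, 1 ≤ r → r ≤ P →
      (∀ᵐ ω ∂μ, Tendsto
          (fun n => ((φ ^ 2) ^ n)⁻¹ *
            ∑ j ∈ Finset.range n, X (j * P + r - 1) ω * u (j * P + r) ω)
          atTop (𝓝 0)) ∧
      Tendsto (fun n => ∫ ω,
          |((φ ^ 2) ^ n)⁻¹ *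
            ∑ j ∈ Finset.range n, X (j * P + r - 1) ω * u (j * P + r) ω| ∂μ)
        atTop (𝓝 0) :=
  stmt16_general μ P hP a hper φ hφdef hφ u huL2 hpd X hX0 hrec
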